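/- Let W be the Weyl group of type C_n acting on the Laurent polynomial ring ℂ[t_1^{±1}, ..., t_n^{±1}] by permuting the variables and inverting variables (t_i ↦ t_i^{-1}). A W-invariant Laurent polynomial f lies in the ℂ-subalgebra generated by the elements t̄_i = (t_i - t_i^{-1})/2 for i = 1,...,n if and only if there exists a symmetric polynomial P with f = P(t̄_1^2, ..., t̄_n^2). -/

import Mathlib

/-!
The subalgebra generated by the `t̄ᵢ` is the image of the evaluation `Q ↦ Q(t̄)`, which is injective
because `c ↦ (c - c⁻¹)/2` maps `ℂˣ` onto `ℂ`, so a polynomial vanishing at all `t̄` vanishes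
everywhere. Evaluation intertwines the signed permutations `Xᵢ ↦ ±X_{σ i}` of `ℂ[X]` with the
action of `W`, hence if `f = Q(t̄)` is `W`-invariant then so is `Q`. Invariance under sign changes
forces every exponent of `Q` to be even, `Q = P(X²)`, and invariance under permutations makes `P`
symmetric.
-/

open MvPolynomial

/-- The element `t̄_i = (t_i - t_i⁻¹)/2` of the Laurent polynomial ring
`ℂ[t_1^{±1},…,t_n^{±1}]`, modelled as the group algebra `ℂ[ℤ^n]`. -/
noncomputable def tbar (n : ℕ) (i : Fin n) : AddMonoidAlgebra ℂ (Fin n →₀ ℤ) :=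
  (2 : ℂ)⁻¹ • (AddMonoidAlgebra.single (Finsupp.single i 1) 1 -
    AddMonoidAlgebra.single (Finsupp.single i (-1)) 1)

namespace MvPolynomial

variable {σ R : Type*}

theorem aeval_smul_X_monomial [CommSemiring R] (c : σ → R) (u : σ →₀ ℕ) (a : R) :
    aeval (fun i => c i • X i) (monomial u a) = monomial u ((u.prod fun i k => c i ^ k) * a) := by
  simp_rw [aeval_monomial, monomial_eq, smul_pow, smul_eq_C_mul, Finsupp.prod_mul,
    ← map_finsuppProd C, algebraMap_eq, map_mul]
  ring

theorem coeff_aeval_smul_X [CommSemiring R] (c : σ → R) (φ : MvPolynomial σ R) (m : σ →₀ ℕ) :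
    coeff m (aeval (fun i => c i • X i) φ) = (m.prod fun i k => c i ^ k) * coeff m φ := by
  classical
  induction φ using induction_on' with
  | monomial u a =>
    rw [aeval_smul_X_monomial, coeff_monomial, coeff_monomial]
    split_ifs with h
    · rw [h]
    · rw [mul_zero]
  | add φ ψ hφ hψ => rw [map_add, coeff_add, coeff_add, hφ, hψ, mul_add]

theorem even_of_forall_aeval_smul_X_eq [CommRing R] [NoZeroDivisors R] [CharZero R]
    {φ : MvPolynomial σ R} (h : ∀ ε : σ → ℤˣ, aeval (fun i => ((ε i : ℤ) : R) • X i) φ = φ)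
    {m : σ →₀ ℕ} (hm : m ∈ φ.support) (i : σ) : Even (m i) := by
  classical
  by_contra hodd
  have hflip := congrArg (coeff m) (h (Pi.mulSingle i (-1)))
  have hsign : (m.prod fun j k => (((Pi.mulSingle i (-1) : σ → ℤˣ) j : ℤ) : R) ^ k) = -1 := by
    rw [Finsupp.prod, Finset.prod_eq_single i]
    · simpa using (Nat.not_even_iff_odd.mp hodd).neg_one_pow
    · intro j _ hj
      simp [hj]
    · intro hi
      exact (hodd (by simp [Finsupp.notMem_support_iff.mp hi])).elim
  rw [coeff_aeval_smul_X, hsign, neg_one_mul, CharZero.neg_eq_self_iff] at hflip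
  exact mem_support_iff.mp hm hflip

theorem exists_expand_eq_of_forall_dvd {p : ℕ} [CommSemiring R]
    {φ : MvPolynomial σ R} (h : ∀ m ∈ φ.support, ∀ i, p ∣ m i) : ∃ ψ, expand p ψ = φ := by
  refine ⟨∑ m ∈ φ.support, monomial (m.mapRange (· / p) (Nat.zero_div p)) (coeff m φ), ?_⟩
  conv_rhs => rw [φ.as_sum]
  rw [map_sum]
  refine Finset.sum_congr rfl fun m hm => ?_
  have hhalf : p • m.mapRange (· / p) (Nat.zero_div p) = m := by
    ext i
    simp [Nat.mul_div_cancel' (h m hm i)]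
  rw [expand_monomial, hhalf]

theorem IsSymmetric.of_expand [CommSemiring R] {p : ℕ} (hp : p ≠ 0) {φ : MvPolynomial σ R}
    (h : (expand p φ).IsSymmetric) : φ.IsSymmetric :=
  fun e => expand_injective (Nat.pos_of_ne_zero hp) <| by rw [← rename_expand, h e]

end MvPolynomial

section Laurent

variable {K ι : Type*}

/-- Evaluation of Laurent polynomials at a point `c` of the torus `(Kˣ)^ι`. -/
noncomputable def laurentEval [Field K] (c : ι → Kˣ) : AddMonoidAlgebra K (ι →₀ ℤ) →ₐ[K] K :=
  AddMonoidAlgebra.lift K K (ι →₀ ℤ) <| (Units.coeHom K).comp <|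
    AddMonoidHom.toMultiplicativeLeft <|
      Finsupp.liftAddHom fun i => zmultiplesHom (Additive Kˣ) (Additive.ofMul (c i))

theorem laurentEval_single_single [Field K] (c : ι → Kˣ) (i : ι) (k : ℤ) (a : K) :
    laurentEval c (AddMonoidAlgebra.single (Finsupp.single i k) a) = a * (c i : K) ^ k := by
  simp [laurentEval]

theorem laurentEval_tbar {n : ℕ} (c : Fin n → ℂˣ) (i : Fin n) :
    laurentEval c (tbar n i) = ((c i : ℂ) - (c i : ℂ)⁻¹) / 2 := by
  rw [tbar, map_smul, map_sub, laurentEval_single_single, laurentEval_single_single, zpow_one,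
    zpow_neg_one, smul_eq_mul]
  ring

theorem exists_units_sub_inv_div_two_eq [Field K] [IsAlgClosed K] [NeZero (2 : K)] (a : K) :
    ∃ c : Kˣ, ((c : K) - (c : K)⁻¹) / 2 = a := by
  obtain ⟨b, hb⟩ := IsAlgClosed.exists_pow_nat_eq (a ^ 2 + 1) two_pos
  have hab : a + b ≠ 0 := fun h =>
    one_ne_zero (by linear_combination (b - a) * h - hb : (1 : K) = 0)
  refine ⟨Units.mk0 (a + b) hab, ?_⟩
  rw [Units.val_mk0]
  field_simp
  linear_combination hb

theorem aeval_tbar_injective (n : ℕ) :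
    Function.Injective (aeval (tbar n) : MvPolynomial (Fin n) ℂ →ₐ[ℂ] _) := by
  rw [injective_iff_map_eq_zero]
  intro Q hQ
  refine MvPolynomial.funext fun x => ?_
  choose c hc using fun i => exists_units_sub_inv_div_two_eq (x i)
  have hx : aeval (fun i => laurentEval c (tbar n i)) Q = 0 := by
    rw [← comp_aeval_apply, hQ, map_zero]
  simpa [laurentEval_tbar, hc, coe_aeval_eq_eval] using hx

/-- `(σ, ε) ∈ S_ι ⋉ {±1}^ι` acting on exponent vectors, so that `t^m ↦ t^(σ, ε)m` is the action
of the type `C` Weyl group on Laurent polynomials. -/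
noncomputable def signedPermExponent [Finite ι] (σ : Equiv.Perm ι) (ε : ι → ℤˣ) :
    (ι →₀ ℤ) ≃+ (ι →₀ ℤ) :=
  ((Finsupp.linearEquivFunOnFinite ℤ ℤ ι).trans <| (LinearEquiv.funCongrLeft ℤ ℤ σ⁻¹).trans <|
    (LinearEquiv.piCongrRight fun i => LinearEquiv.smulOfUnit (ε i)).trans
      (Finsupp.linearEquivFunOnFinite ℤ ℤ ι).symm).toAddEquiv

theorem signedPermExponent_apply [Finite ι] (σ : Equiv.Perm ι) (ε : ι → ℤˣ) (m : ι →₀ ℤ) :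
    signedPermExponent σ ε m = Finsupp.equivFunOnFinite.symm fun i => (ε i : ℤ) * m (σ⁻¹ i) :=
  rfl

theorem signedPermExponent_single [Finite ι] [DecidableEq ι] (σ : Equiv.Perm ι) (ε : ι → ℤˣ)
    (i : ι) (k : ℤ) :
    signedPermExponent σ ε (Finsupp.single i k) = Finsupp.single (σ i) ((ε (σ i) : ℤ) * k) := by
  ext j
  rw [signedPermExponent_apply, Finsupp.equivFunOnFinite_symm_apply_apply, Finsupp.single_apply,
    Finsupp.single_apply]
  by_cases h : σ i = j
  · subst h
    simp
  · simp [h, Equiv.eq_symm_apply]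

theorem domCongr_signedPermExponent_tbar {n : ℕ} (σ : Equiv.Perm (Fin n)) (ε : Fin n → ℤˣ)
    (i : Fin n) :
    AddMonoidAlgebra.domCongr ℂ ℂ (signedPermExponent σ ε) (tbar n i) =
      ((ε (σ i) : ℤ) : ℂ) • tbar n (σ i) := by
  rcases Int.units_eq_one_or (ε (σ i)) with h | h <;>
    simp [tbar, AddMonoidAlgebra.domCongr_single, signedPermExponent_single, h, smul_sub,
      neg_add_eq_sub]

theorem domCongr_signedPermExponent_eq_self [Finite ι] [CommSemiring K]
    {f : AddMonoidAlgebra K (ι →₀ ℤ)}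
    (hinv : ∀ (σ : Equiv.Perm ι) (ε : ι → ℤˣ) (m : ι →₀ ℤ),
      f.coeff (signedPermExponent σ ε m) = f.coeff m)
    (σ : Equiv.Perm ι) (ε : ι → ℤˣ) :
    AddMonoidAlgebra.domCongr K K (signedPermExponent σ ε) f = f := by
  ext m
  rw [AddMonoidAlgebra.coeff_domCongr, ← hinv σ ε, AddEquiv.apply_symm_apply]

theorem aeval_tbar_aeval_signedPerm {n : ℕ} (σ : Equiv.Perm (Fin n)) (ε : Fin n → ℤˣ)
    (Q : MvPolynomial (Fin n) ℂ) :
    aeval (tbar n) (aeval (fun i => ((ε (σ i) : ℤ) : ℂ) • (X (σ i) : MvPolynomial (Fin n) ℂ)) Q) =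
      AddMonoidAlgebra.domCongr ℂ ℂ (signedPermExponent σ ε) (aeval (tbar n) Q) := by
  suffices (aeval (tbar n)).comp
      (aeval fun i => ((ε (σ i) : ℤ) : ℂ) • (X (σ i) : MvPolynomial (Fin n) ℂ)) =
      (AddMonoidAlgebra.domCongr ℂ ℂ (signedPermExponent σ ε)).toAlgHom.comp (aeval (tbar n)) from
    congrArg (· Q) this
  refine algHom_ext fun i => ?_
  simp [domCongr_signedPermExponent_tbar]
end Laurent

/-- a Laurent polynomial `f` invariant under the type `C_n` Weyl group
`W = S_n ⋉ (ℤ/2)^n` (acting by permuting the variables and inverting variables; invariance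
is expressed on coefficients: the coefficient of `f` at an exponent vector `m` equals its
coefficient at the transformed exponent vector) lies in the `ℂ`-subalgebra generated by
`t̄_1, …, t̄_n` if and only if `f = P(t̄_1^2, …, t̄_n^2)` for some symmetric polynomial `P`. -/
theorem stmt10 (n : ℕ) (f : AddMonoidAlgebra ℂ (Fin n →₀ ℤ))
    (hinv : ∀ (σ : Equiv.Perm (Fin n)) (ε : Fin n → ℤˣ) (m : Fin n →₀ ℤ),
      f.coeff (Finsupp.equivFunOnFinite.symm fun i => (ε i : ℤ) * m (σ⁻¹ i)) = f.coeff m) :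
    f ∈ Algebra.adjoin ℂ (Set.range (tbar n)) ↔
      ∃ P : MvPolynomial (Fin n) ℂ, P.IsSymmetric ∧
        MvPolynomial.aeval (fun i => tbar n i ^ 2) P = f := by
  rw [Algebra.adjoin_range_eq_range_aeval]
  constructor
  · intro hf
    obtain ⟨Q, rfl⟩ : ∃ Q, aeval (tbar n) Q = f := hf
    have hfix (σ : Equiv.Perm (Fin n)) (ε : Fin n → ℤˣ) :
        aeval (fun i => ((ε (σ i) : ℤ) : ℂ) • (X (σ i) : MvPolynomial (Fin n) ℂ)) Q = Q :=
      aeval_tbar_injective n <| by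
        rw [aeval_tbar_aeval_signedPerm, domCongr_signedPermExponent_eq_self hinv]
    have hsign (ε : Fin n → ℤˣ) : aeval (fun i => ((ε i : ℤ) : ℂ) • X i) Q = Q := hfix 1 ε
    have hperm (σ : Equiv.Perm (Fin n)) : rename σ Q = Q := by
      rw [rename_eq_aeval]
      simpa only [Pi.one_apply, Units.val_one, Int.cast_one, one_smul, Function.comp_def] using
        hfix σ 1
    obtain ⟨P, rfl⟩ := exists_expand_eq_of_forall_dvd fun m hm i =>
      (even_of_forall_aeval_smul_X_eq hsign hm i).two_dvd
    refine ⟨P, IsSymmetric.of_expand two_ne_zero hperm, ?_⟩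
    rw [aeval_expand, Pi.pow_def]
  · rintro ⟨P, -, rfl⟩
    exact ⟨expand 2 P, by rw [AlgHom.toRingHom_eq_coe, RingHom.coe_coe, aeval_expand, Pi.pow_def]⟩
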